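/- arXiv:1011.5737 — 5 statements merged into one kernel-verified Lean document; each statement's English description precedes it below -/
import Mathlib

section
/- Let G be a chordal graph containing a 6-cycle on vertices a, b, c, d, e, f with edges ab, bc, cd, de, ef, fa. If bd, ce, and df are not edges of G, then ac, ad, and ae are edges of G. -/
/-!
In a chordal graph, a vertex `v` off an induced path `x₀ … x_k` that is adjacent to both ends
is adjacent to every vertex of the path: for `k ≥ 2` the cycle `v x₀ … x_k` of length `k + 2`
needs a chord, which can only join `v` to some interior `x_m`, and induction applies to the two
halves `x₀ … x_m` and `x_m … x_k`. Consequently an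
induced path `x₀ … x_{k+1}` extends by any new neighbour `y` of `x_{k+1}` that misses `x_k`.
Starting from `b c` and using the non-edges `bd`, `ce`, `df`, this makes `b c d e f` an induced
path, and `a`, adjacent to `b` and `f`, is then adjacent to `c`, `d` and `e`.
-/

open SimpleGraph

/-- `f : ZMod n → V` traces an induced cycle of length `n` in `G`:
`f` is injective and adjacency holds exactly between consecutive vertices. -/
def IsInducedCycle {V : Type*} (G : SimpleGraph V) (n : ℕ) (f : ZMod n → V) : Prop :=
  Function.Injective f ∧ ∀ i j : ZMod n, G.Adj (f i) (f j) ↔ (j = i + 1 ∨ i = j + 1)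

/-- A graph is chordal if it has no induced cycle of length at least 4. -/
def Chordal {V : Type*} (G : SimpleGraph V) : Prop :=
  ∀ n, 4 ≤ n → ∀ f : ZMod n → V, ¬ IsInducedCycle G n f

/-- `G'` is a chordal completion of `G`. -/
def ChordalCompletion {V : Type*} (G G' : SimpleGraph V) : Prop :=
  Chordal G' ∧ G ≤ G'

/-- Minimal chordal completion: no proper spanning subgraph containing `G` is chordal. -/
def MinimalChordalCompletion {V : Type*} (G G' : SimpleGraph V) : Prop :=
  ChordalCompletion G G' ∧ ∀ H, ChordalCompletion G H → H ≤ G' → H = G'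

lemma ZMod.eq_add_one_iff_val {n : ℕ} (hn : 1 < n) (i j : ZMod n) :
    j = i + 1 ↔ j.val = i.val + 1 ∨ i.val + 1 = n ∧ j.val = 0 := by
  have : Fact (1 < n) := ⟨hn⟩
  rw [← (ZMod.val_injective n).eq_iff, ZMod.val_add, ZMod.val_one]
  obtain h | h : i.val + 1 < n ∨ i.val + 1 = n := by have := i.val_lt; omega
  · rw [Nat.mod_eq_of_lt h]
    omega
  · rw [h, Nat.mod_self]
    have := j.val_lt
    omega

section

variable {V : Type*} {G : SimpleGraph V}

theorem isInducedCycle_comp_val {n : ℕ} (hn : 1 < n) {g : ℕ → V}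
    (hinj : Set.InjOn g (Set.Iio n))
    (hadj : ∀ i < n, ∀ j < n, G.Adj (g i) (g j) ↔
      j = i + 1 ∨ i = j + 1 ∨ i + 1 = n ∧ j = 0 ∨ j + 1 = n ∧ i = 0) :
    IsInducedCycle G n (fun i => g i.val) := by
  have : NeZero n := ⟨by omega⟩
  refine ⟨fun i j h => ZMod.val_injective n (hinj i.val_lt j.val_lt h), fun i j => ?_⟩
  rw [hadj _ i.val_lt _ j.val_lt, ZMod.eq_add_one_iff_val hn, ZMod.eq_add_one_iff_val hn]
  tauto

/-- `x 0, …, x k` is an induced path of `G`; the values of `x` past `k` play no role. -/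
def IsInducedPath (G : SimpleGraph V) (x : ℕ → V) (k : ℕ) : Prop :=
  Set.InjOn x (Set.Iic k) ∧
    ∀ i ≤ k, ∀ j ≤ k, G.Adj (x i) (x j) ↔ j = i + 1 ∨ i = j + 1

namespace IsInducedPath

variable {x : ℕ → V} {k : ℕ}

theorem of_adj (hne : x 0 ≠ x 1) (hadj : G.Adj (x 0) (x 1)) : IsInducedPath G x 1 := by
  refine ⟨fun i hi j hj hij => ?_, fun i hi j hj => ?_⟩
  · simp only [Set.mem_Iic] at hi hj
    interval_cases i <;> interval_cases j <;>
      first | rfl | exact absurd hij hne | exact absurd hij.symm hne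
  · interval_cases i <;> interval_cases j <;> simp [hadj, hadj.symm]

theorem mono (hx : IsInducedPath G x k) {j : ℕ} (hj : j ≤ k) : IsInducedPath G x j :=
  ⟨hx.1.mono (Set.Iic_subset_Iic.2 hj),
    fun i hi l hl => hx.2 i (hi.trans hj) l (hl.trans hj)⟩

theorem shift (hx : IsInducedPath G x k) {m : ℕ} (hm : m ≤ k) :
    IsInducedPath G (fun t => x (m + t)) (k - m) := by
  refine ⟨fun i hi j hj hij => ?_, fun i hi j hj => ?_⟩
  · simp only [Set.mem_Iic] at hi hj
    have := hx.1 (Set.mem_Iic.2 (by omega : m + i ≤ k))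
      (Set.mem_Iic.2 (by omega : m + j ≤ k)) hij
    omega
  · rw [hx.2 _ (by omega) _ (by omega)]
    omega

end IsInducedPath

namespace Chordal

variable {x : ℕ → V} {k : ℕ} {v : V}

theorem exists_adj_of_isInducedPath (hG : Chordal G) (hx : IsInducedPath G x k) (hk2 : 2 ≤ k)
    (hv : ∀ i ≤ k, x i ≠ v) (h0 : G.Adj v (x 0)) (hk : G.Adj v (x k)) :
    ∃ i, 0 < i ∧ i < k ∧ G.Adj v (x i) := by
  by_contra! hnone
  have hends : ∀ i ≤ k, G.Adj v (x i) ↔ i = 0 ∨ i = k := fun i hi =>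
    ⟨fun h => by by_contra! hi'; exact hnone i (by omega) (by omega) h,
      by rintro (rfl | rfl) <;> assumption⟩
  let g : ℕ → V := fun t => if t ≤ k then x t else v
  refine hG (k + 2) (by omega) _ (isInducedCycle_comp_val (g := g) (by omega) ?_ ?_)
  · intro i hi j hj hij
    simp only [Set.mem_Iio] at hi hj
    simp only [g] at hij
    split_ifs at hij with h1 h2 h2
    · exact hx.1 h1 h2 hij
    · exact absurd hij (hv i h1)
    · exact absurd hij.symm (hv j h2)
    · omega
  · intro i hi j hj
    simp only [g]
    split_ifs with h1 h2 h2
    · rw [hx.2 i h1 j h2]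
      omega
    · rw [G.adj_comm, hends i h1]
      omega
    · rw [hends j h2]
      omega
    · exact iff_of_false (G.irrefl) (by omega)

theorem adj_of_isInducedPath (hG : Chordal G) (hx : IsInducedPath G x k)
    (hv : ∀ i ≤ k, x i ≠ v) (h0 : G.Adj v (x 0)) (hk : G.Adj v (x k)) :
    ∀ i ≤ k, G.Adj v (x i) := by
  induction k using Nat.strong_induction_on generalizing x with
  | _ k ih =>
  intro i hi
  by_cases hk2 : k < 2
  · interval_cases k <;> interval_cases i <;> assumption
  obtain ⟨m, hm0, hmk, hm⟩ := hG.exists_adj_of_isInducedPath hx (by omega) hv h0 hk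
  rcases le_total i m with him | hmi
  · exact ih m hmk (hx.mono hmk.le) (fun j hj => hv j (by omega)) h0 hm i him
  · have := ih (k - m) (by omega) (hx.shift hmk.le) (fun j hj => hv _ (by omega))
      (by simpa using hm) (by rwa [Nat.add_sub_cancel' hmk.le]) (i - m) (by omega)
    rwa [Nat.add_sub_cancel' hmi] at this

theorem isInducedPath_succ (hG : Chordal G) (hx : IsInducedPath G x (k + 1))
    (hnew : ∀ i ≤ k + 1, x i ≠ x (k + 2)) (hadj : G.Adj (x (k + 1)) (x (k + 2)))
    (hnadj : ¬ G.Adj (x k) (x (k + 2))) : IsInducedPath G x (k + 2) := by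
  have hlast : ∀ i ≤ k + 1, G.Adj (x (k + 2)) (x i) ↔ i = k + 1 := by
    refine fun i hi => ⟨fun h => ?_, by rintro rfl; exact hadj.symm⟩
    by_contra hne
    have := hG.adj_of_isInducedPath (hx.shift hi) (fun j hj => hnew _ (by omega))
      (by simpa using h) (by rw [Nat.add_sub_cancel' hi]; exact hadj.symm) (k - i) (by omega)
    rw [Nat.add_sub_cancel' (by omega)] at this
    exact hnadj this.symm
  refine ⟨fun i hi j hj hij => ?_, fun i hi j hj => ?_⟩
  · simp only [Set.mem_Iic] at hi hj
    obtain hi | rfl : i ≤ k + 1 ∨ i = k + 2 := by omega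
    · obtain hj | rfl : j ≤ k + 1 ∨ j = k + 2 := by omega
      · exact hx.1 hi hj hij
      · exact absurd hij (hnew i hi)
    · obtain hj | rfl : j ≤ k + 1 ∨ j = k + 2 := by omega
      · exact absurd hij.symm (hnew j hj)
      · rfl
  · obtain hi | rfl : i ≤ k + 1 ∨ i = k + 2 := by omega
    · obtain hj | rfl : j ≤ k + 1 ∨ j = k + 2 := by omega
      · exact hx.2 i hi j hj
      · rw [G.adj_comm, hlast i hi]
        omega
    · obtain hj | rfl : j ≤ k + 1 ∨ j = k + 2 := by omega
      · rw [hlast j hj]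
        omega
      · exact iff_of_false (G.irrefl) (by omega)

end Chordal

end

theorem stmt_5 {V : Type*} (G : SimpleGraph V) (hG : Chordal G)
    (a b c d e f : V) (hdist : [a, b, c, d, e, f].Pairwise (· ≠ ·))
    (hab : G.Adj a b) (hbc : G.Adj b c) (hcd : G.Adj c d)
    (hde : G.Adj d e) (hef : G.Adj e f) (hfa : G.Adj f a)
    (hbd : ¬ G.Adj b d) (hce : ¬ G.Adj c e) (hdf : ¬ G.Adj d f) :
    G.Adj a c ∧ G.Adj a d ∧ G.Adj a e := by
  let x : ℕ → V := fun i => [b, c, d, e, f].getD i a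
  have hpath : IsInducedPath G x 4 := by
    refine hG.isInducedPath_succ (k := 2) ?_ ?_ hef hdf
    refine hG.isInducedPath_succ (k := 1) ?_ ?_ hde hce
    refine hG.isInducedPath_succ (k := 0) (.of_adj (by simp_all [x]) hbc) ?_ hcd hbd
    all_goals intro i hi; interval_cases i <;> simp_all [x]
  have ha := hG.adj_of_isInducedPath hpath
    (fun i hi => by interval_cases i <;> simp_all [x, eq_comm]) hab hfa.symm
  exact ⟨ha 1 (by norm_num), ha 2 (by norm_num), ha 3 (by norm_num)⟩
end

section
/- Let G be a chordal graph containing a 6-cycle on vertices a, b, c, d, e, f with edges ab, bc, cd, de, ef, fa. If bd, ce, and cf are not edges of G, then ac and ad are edges of G. -/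
open SimpleGraph

/-!
Chordality forbids chordless cycles of length 4, 5 and 6, and every way the conclusion could
fail produces one. First `be` is not an edge, else `bcde` is chordless. If `ac` were not an
edge, then neither is `ad` (cycle `abcd`) nor `ae` (cycle `abcde`), and whichever of `bf`, `df`
are edges, one of `bcdf`, `abcdf`, `bcdef`, `abcdef` is chordless. Once `ac` is an edge, a
missing `ad` forces `ae` and `df` to be missing too (cycles `acde`, `acdf`), and then `acdef`
is chordless.
-/

namespace Chordal

variable {V : Type*} {G : SimpleGraph V}

theorem false_of_chordless_cycle4 (hG : Chordal G) {v₀ v₁ v₂ v₃ : V}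
    (hnd : [v₀, v₁, v₂, v₃].Nodup)
    (h₀₁ : G.Adj v₀ v₁) (h₁₂ : G.Adj v₁ v₂) (h₂₃ : G.Adj v₂ v₃) (h₃₀ : G.Adj v₃ v₀)
    (h₀₂ : ¬G.Adj v₀ v₂) (h₁₃ : ¬G.Adj v₁ v₃) : False := by
  refine hG 4 le_rfl ![v₀, v₁, v₂, v₃] ⟨List.nodup_ofFn.mp hnd, ?_⟩
  -- `ZMod 4` is `Fin 4` by definition; restated over `Fin`, `fin_cases` can enumerate it.
  show ∀ i j : Fin 4, _ ↔ (j = i + 1 ∨ i = j + 1)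
  intro i j
  fin_cases i <;> fin_cases j <;> simp_all [adj_comm]

theorem false_of_chordless_cycle5 (hG : Chordal G) {v₀ v₁ v₂ v₃ v₄ : V}
    (hnd : [v₀, v₁, v₂, v₃, v₄].Nodup)
    (h₀₁ : G.Adj v₀ v₁) (h₁₂ : G.Adj v₁ v₂) (h₂₃ : G.Adj v₂ v₃) (h₃₄ : G.Adj v₃ v₄)
    (h₄₀ : G.Adj v₄ v₀)
    (h₀₂ : ¬G.Adj v₀ v₂) (h₀₃ : ¬G.Adj v₀ v₃) (h₁₃ : ¬G.Adj v₁ v₃) (h₁₄ : ¬G.Adj v₁ v₄)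
    (h₂₄ : ¬G.Adj v₂ v₄) : False := by
  refine hG 5 (by norm_num) ![v₀, v₁, v₂, v₃, v₄] ⟨List.nodup_ofFn.mp hnd, ?_⟩
  show ∀ i j : Fin 5, _ ↔ (j = i + 1 ∨ i = j + 1)
  intro i j
  fin_cases i <;> fin_cases j <;> simp_all [adj_comm]

theorem false_of_chordless_cycle6 (hG : Chordal G) {v₀ v₁ v₂ v₃ v₄ v₅ : V}
    (hnd : [v₀, v₁, v₂, v₃, v₄, v₅].Nodup)
    (h₀₁ : G.Adj v₀ v₁) (h₁₂ : G.Adj v₁ v₂) (h₂₃ : G.Adj v₂ v₃) (h₃₄ : G.Adj v₃ v₄)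
    (h₄₅ : G.Adj v₄ v₅) (h₅₀ : G.Adj v₅ v₀)
    (h₀₂ : ¬G.Adj v₀ v₂) (h₀₃ : ¬G.Adj v₀ v₃) (h₀₄ : ¬G.Adj v₀ v₄) (h₁₃ : ¬G.Adj v₁ v₃)
    (h₁₄ : ¬G.Adj v₁ v₄) (h₁₅ : ¬G.Adj v₁ v₅) (h₂₄ : ¬G.Adj v₂ v₄) (h₂₅ : ¬G.Adj v₂ v₅)
    (h₃₅ : ¬G.Adj v₃ v₅) : False := by
  refine hG 6 (by norm_num) ![v₀, v₁, v₂, v₃, v₄, v₅] ⟨List.nodup_ofFn.mp hnd, ?_⟩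
  show ∀ i j : Fin 6, _ ↔ (j = i + 1 ∨ i = j + 1)
  intro i j
  fin_cases i <;> fin_cases j <;> simp_all [adj_comm]

end Chordal

theorem stmt_6 {V : Type*} (G : SimpleGraph V) (hG : Chordal G)
    (a b c d e f : V) (hdist : [a, b, c, d, e, f].Pairwise (· ≠ ·))
    (hab : G.Adj a b) (hbc : G.Adj b c) (hcd : G.Adj c d)
    (hde : G.Adj d e) (hef : G.Adj e f) (hfa : G.Adj f a)
    (hbd : ¬ G.Adj b d) (hce : ¬ G.Adj c e) (hcf : ¬ G.Adj c f) :
    G.Adj a c ∧ G.Adj a d := by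
  have hnd : [a, b, c, d, e, f].Nodup := hdist
  have hbe : ¬G.Adj b e := fun hbe =>
    hG.false_of_chordless_cycle4 (hnd.sublist (by simp)) hbc hcd hde hbe.symm hbd hce
  have hac : G.Adj a c := by
    by_contra hac
    have had : ¬G.Adj a d := fun had =>
      hG.false_of_chordless_cycle4 (hnd.sublist (by simp)) hab hbc hcd had.symm hac hbd
    have hae : ¬G.Adj a e := fun hae =>
      hG.false_of_chordless_cycle5 (hnd.sublist (by simp)) hab hbc hcd hde hae.symm
        hac had hbd hbe hce
    by_cases hdf : G.Adj d f <;> by_cases hbf : G.Adj b f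
    · exact hG.false_of_chordless_cycle4 (hnd.sublist (by simp)) hbc hcd hdf hbf.symm hbd hcf
    · exact hG.false_of_chordless_cycle5 (hnd.sublist (by simp)) hab hbc hcd hdf hfa
        hac had hbd hbf hcf
    · exact hG.false_of_chordless_cycle5 (hnd.sublist (by simp)) hbc hcd hde hef hbf.symm
        hbd hbe hce hcf hdf
    · exact hG.false_of_chordless_cycle6 hnd hab hbc hcd hde hef hfa
        hac had hae hbd hbe hbf hce hcf hdf
  refine ⟨hac, ?_⟩
  by_contra had
  have hae : ¬G.Adj a e := fun hae =>
    hG.false_of_chordless_cycle4 (hnd.sublist (by simp)) hac hcd hde hae.symm had hce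
  have hdf : ¬G.Adj d f := fun hdf =>
    hG.false_of_chordless_cycle4 (hnd.sublist (by simp)) hac hcd hdf hfa had hcf
  exact hG.false_of_chordless_cycle5 (hnd.sublist (by simp)) hac hcd hde hef hfa
    had hae hce hcf hdf
end

section
/- Let G be a chordal graph containing a 6-cycle on vertices a, b, c, d, e, f with edges ab, bc, cd, de, ef, fa. If be, bf, ce, and cf are not edges of G, then ad is an edge of G. -/
open SimpleGraph

/-!
Suppose `ad` is not an edge. Each of the two `a`–`d` paths `a b c d` and `a f e d` either has a
chord through which `a` and `d` get a common neighbour on that side, or is already induced. As no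
edge joins `{b, c}` to `{e, f}`, the two resulting induced paths close up into an induced cycle
of length 4, 5 or 6, which chordality forbids.
-/

section

variable {V : Type*} {G : SimpleGraph V}

theorem isInducedCycle_four {w x y z : V}
    (hwx : G.Adj w x) (hxy : G.Adj x y) (hyz : G.Adj y z) (hzw : G.Adj z w)
    (hwy : ¬ G.Adj w y) (hxz : ¬ G.Adj x z) (hwy' : w ≠ y) (hxz' : x ≠ z) :
    IsInducedCycle G 4 ![w, x, y, z] := by
  have h4 : ∀ i : ZMod 4, i = 0 ∨ i = 1 ∨ i = 2 ∨ i = 3 := by decide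
  have := hwx.ne; have := hxy.ne; have := hyz.ne; have := hzw.ne
  refine ⟨fun i j hij => ?_, fun i j => ?_⟩ <;>
    rcases h4 i with rfl | rfl | rfl | rfl <;> rcases h4 j with rfl | rfl | rfl | rfl <;>
    simp_all [G.adj_comm, eq_comm] <;> decide

theorem isInducedCycle_five {v w x y z : V}
    (hvw : G.Adj v w) (hwx : G.Adj w x) (hxy : G.Adj x y) (hyz : G.Adj y z) (hzv : G.Adj z v)
    (hvx : ¬ G.Adj v x) (hvy : ¬ G.Adj v y) (hwy : ¬ G.Adj w y) (hwz : ¬ G.Adj w z)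
    (hxz : ¬ G.Adj x z)
    (hvx' : v ≠ x) (hvy' : v ≠ y) (hwy' : w ≠ y) (hwz' : w ≠ z) (hxz' : x ≠ z) :
    IsInducedCycle G 5 ![v, w, x, y, z] := by
  have h5 : ∀ i : ZMod 5, i = 0 ∨ i = 1 ∨ i = 2 ∨ i = 3 ∨ i = 4 := by decide
  have := hvw.ne; have := hwx.ne; have := hxy.ne; have := hyz.ne; have := hzv.ne
  refine ⟨fun i j hij => ?_, fun i j => ?_⟩ <;>
    rcases h5 i with rfl | rfl | rfl | rfl | rfl <;>
    rcases h5 j with rfl | rfl | rfl | rfl | rfl <;>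
    simp_all [G.adj_comm, eq_comm] <;> decide

theorem isInducedCycle_six {u v w x y z : V}
    (huv : G.Adj u v) (hvw : G.Adj v w) (hwx : G.Adj w x) (hxy : G.Adj x y) (hyz : G.Adj y z)
    (hzu : G.Adj z u)
    (huw : ¬ G.Adj u w) (hux : ¬ G.Adj u x) (huy : ¬ G.Adj u y) (hvx : ¬ G.Adj v x)
    (hvy : ¬ G.Adj v y) (hvz : ¬ G.Adj v z) (hwy : ¬ G.Adj w y) (hwz : ¬ G.Adj w z)
    (hxz : ¬ G.Adj x z)
    (huw' : u ≠ w) (hux' : u ≠ x) (huy' : u ≠ y) (hvx' : v ≠ x) (hvy' : v ≠ y) (hvz' : v ≠ z)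
    (hwy' : w ≠ y) (hwz' : w ≠ z) (hxz' : x ≠ z) :
    IsInducedCycle G 6 ![u, v, w, x, y, z] := by
  have h6 : ∀ i : ZMod 6, i = 0 ∨ i = 1 ∨ i = 2 ∨ i = 3 ∨ i = 4 ∨ i = 5 := by decide
  have := huv.ne; have := hvw.ne; have := hwx.ne; have := hxy.ne; have := hyz.ne
  have := hzu.ne
  refine ⟨fun i j hij => ?_, fun i j => ?_⟩ <;>
    rcases h6 i with rfl | rfl | rfl | rfl | rfl | rfl <;>
    rcases h6 j with rfl | rfl | rfl | rfl | rfl | rfl <;>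
    simp_all [G.adj_comm, eq_comm] <;> decide

theorem exists_adj_adj_or_chordless_path {a b c d : V} (hab : G.Adj a b) (hcd : G.Adj c d) :
    (∃ m, (m = b ∨ m = c) ∧ G.Adj a m ∧ G.Adj m d) ∨ (¬ G.Adj a c ∧ ¬ G.Adj b d) := by
  by_cases hac : G.Adj a c
  · exact .inl ⟨c, .inr rfl, hac, hcd⟩
  by_cases hbd : G.Adj b d
  · exact .inl ⟨b, .inl rfl, hab, hbd⟩
  exact .inr ⟨hac, hbd⟩

end

theorem stmt_7 {V : Type*} (G : SimpleGraph V) (hG : Chordal G)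
    (a b c d e f : V) (hdist : [a, b, c, d, e, f].Pairwise (· ≠ ·))
    (hab : G.Adj a b) (hbc : G.Adj b c) (hcd : G.Adj c d)
    (hde : G.Adj d e) (hef : G.Adj e f) (hfa : G.Adj f a)
    (hbe : ¬ G.Adj b e) (hbf : ¬ G.Adj b f)
    (hce : ¬ G.Adj c e) (hcf : ¬ G.Adj c f) :
    G.Adj a d := by
  simp only [List.pairwise_cons, List.mem_cons, List.not_mem_nil, forall_eq_or_imp,
    or_false, forall_eq, IsEmpty.forall_iff, implies_true, List.Pairwise.nil, and_true] at hdist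
  obtain ⟨⟨-, hac', had', hae', -⟩, ⟨-, hbd', hbe', hbf'⟩, ⟨-, hce', hcf'⟩, ⟨-, hdf'⟩, -⟩ := hdist
  by_contra had
  obtain ⟨m, hm, ham, hmd⟩ | ⟨hac, hbd⟩ := exists_adj_adj_or_chordless_path hab hcd <;>
    obtain ⟨m', hm', ham', hm'd⟩ | ⟨hae, hdf⟩ := exists_adj_adj_or_chordless_path hfa.symm hde.symm
  · rcases hm with rfl | rfl <;> rcases hm' with rfl | rfl <;>
      exact hG 4 le_rfl _ (isInducedCycle_four ham hmd hm'd.symm ham'.symm had ‹_› had' ‹_›)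
  · rcases hm with rfl | rfl <;>
      exact hG 5 (by norm_num) _ (isInducedCycle_five ham hmd hde hef hfa had hae ‹_› ‹_›
        (fun h => hdf h.symm) had' hae' ‹_› ‹_› hdf')
  · rcases hm' with rfl | rfl <;>
      exact hG 5 (by norm_num) _ (isInducedCycle_five hab hbc hcd hm'd.symm ham'.symm hac had hbd
        ‹_› ‹_› hac' had' hbd' ‹_› ‹_›)
  · exact hG 6 (by norm_num) _ (isInducedCycle_six hab hbc hcd hde hef hfa hac had hae hbd hbe hbf
      hce hcf (fun h => hdf h.symm) hac' had' hae' hbd' hbe' hbf' hce' hcf' hdf')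
end

section
/- Every chordal graph that is not complete has at least two non-adjacent simplicial vertices. -/
open SimpleGraph

/-- A vertex is simplicial if its neighbourhood induces a complete graph. -/
def Simplicial {V : Type*} (G : SimpleGraph V) (v : V) : Prop :=
  ∀ u w : V, G.Adj v u → G.Adj v w → u ≠ w → G.Adj u w

namespace DiracAux

variable {V : Type*}

/-- connectivity in `H` avoiding the set `S` -/
def Conn (H : SimpleGraph V) (S : Set V) (u v : V) : Prop :=
  u ∉ S ∧ v ∉ S ∧ Relation.ReflTransGen (fun x y => H.Adj x y ∧ x ∉ S ∧ y ∉ S) u v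

variable {H : SimpleGraph V} {S : Set V} {u v w : V}

lemma conn_refl (hu : u ∉ S) : Conn H S u u := ⟨hu, hu, .refl⟩

lemma conn_step (h : Conn H S u v) (hadj : H.Adj v w) (hw : w ∉ S) : Conn H S u w :=
  ⟨h.1, hw, h.2.2.tail ⟨hadj, h.2.1, hw⟩⟩

lemma conn_symm (h : Conn H S u v) : Conn H S v u := by
  obtain ⟨hu, hv, hr⟩ := h
  refine ⟨hv, hu, ?_⟩
  clear hu hv
  induction hr with
  | refl => exact .refl
  | tail _ h ih => exact .head ⟨h.1.symm, h.2.2, h.2.1⟩ ih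

lemma conn_trans (h : Conn H S u v) (h' : Conn H S v w) : Conn H S u w :=
  ⟨h.1, h'.2.1, h.2.2.trans h'.2.2⟩

lemma conn_end_cases (h : Conn H S u v) : v = u ∨ ∃ z, H.Adj z v := by
  rcases h.2.2.cases_tail with h | ⟨c, _, hc⟩
  · exact .inl h
  · exact .inr ⟨c, hc.1⟩

lemma conn_exists_list (h : Conn H S u v) :
    ∃ l : List V, l.Chain' H.Adj ∧ l[0]? = some u ∧ l[l.length - 1]? = some v ∧
      ∀ w ∈ l, Conn H S u w := by
  obtain ⟨hu, hv, hr⟩ := h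
  clear hv
  induction hr with
  | refl => exact ⟨[u], List.isChain_singleton _, by simp, by simp, by simpa using conn_refl hu⟩
  | @tail b c hr hbc ih =>
    obtain ⟨l, hc, h0, hl, hmem⟩ := ih
    have hlen : 0 < l.length := by
      rcases l with _ | _ <;> simp_all
    refine ⟨l ++ [c], ?_, ?_, ?_, ?_⟩
    · refine List.isChain_append.2 ⟨hc, by simp, ?_⟩
      intro x hx y hy
      simp only [List.head?_cons, Option.mem_def, Option.some.injEq] at hy
      subst hy
      rw [List.getLast?_eq_getElem? ] at hx
      rw [hl] at hx
      obtain rfl : b = x := by simpa using hx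
      exact hbc.1
    · rw [List.getElem?_append, if_pos (by simpa using hlen)] ; exact h0
    · simp only [List.length_append, List.length_cons, List.length_nil]
      rw [List.getElem?_append_right (by omega)]
      simp
    · intro w hw
      rcases List.mem_append.1 hw with hw | hw
      · exact hmem w hw
      · obtain rfl : w = c := by simpa using hw
        have : Conn H S u b := ⟨hu, hbc.2.1, hr⟩
        exact conn_step this hbc.1 hbc.2.2

end DiracAux
namespace DiracAux

variable {V : Type*} {H : SimpleGraph V} {W : Set V} {s t : V}

/-- lists realizing a path from `s` to `t` with all vertices in `{s,t} ∪ W` -/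
def GoodList (H : SimpleGraph V) (W : Set V) (s t : V) (l : List V) : Prop :=
  l.Chain' H.Adj ∧ 0 < l.length ∧ l[0]? = some s ∧ l[l.length - 1]? = some t ∧
    ∀ w ∈ l, w = s ∨ w = t ∨ w ∈ W

lemma glue {l : List V} (hl : GoodList H W s t l) (i c : ℕ) (hic : i + 1 < c)
    (hcn : c ≤ l.length)
    (hjun : ∀ hc : c < l.length, H.Adj (l[i]'(by omega)) (l[c]'hc))
    (hend : c = l.length → l[i]'(by omega) = t) :
    ∃ l', GoodList H W s t l' ∧ l'.length < l.length := by
  obtain ⟨hchain, hpos, h0, hlast, hmem⟩ := hl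
  have hin : i < l.length := by omega
  refine ⟨l.take (i+1) ++ l.drop c, ⟨?_, ?_, ?_, ?_, ?_⟩, ?_⟩
  · refine List.isChain_append.2 ⟨hchain.take _, hchain.drop _, ?_⟩
    intro x hx y hy
    rw [List.head?_drop] at hy
    have hc : c < l.length := by
      by_contra hc
      rw [List.getElem?_eq_none (by omega)] at hy
      simp at hy
    rw [List.getElem?_eq_getElem hc] at hy
    obtain rfl : y = l[c] := by simpa using hy.symm
    rw [List.getLast?_eq_getElem?, List.length_take] at hx
    have : min (i+1) l.length - 1 = i := by omega
    rw [this, List.getElem?_take, if_pos (by omega), List.getElem?_eq_getElem hin] at hx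
    obtain rfl : x = l[i] := by simpa using hx.symm
    exact hjun hc
  · simp only [List.length_append, List.length_take, List.length_drop]; omega
  · rw [List.getElem?_append, if_pos (by simp [List.length_take]; omega),
      List.getElem?_take, if_pos (by omega)]
    exact h0
  · rcases Nat.lt_or_ge c l.length with hc | hc
    · have hlen : (l.take (i+1) ++ l.drop c).length = (i+1) + (l.length - c) := by
        simp only [List.length_append, List.length_take, List.length_drop]; omega
      rw [hlen]
      rw [List.getElem?_append, if_neg (by simp [List.length_take]; omega)]
      rw [List.length_take, List.getElem?_drop]
      have : c + ((i + 1 + (l.length - c) - 1) - min (i+1) l.length) = l.length - 1 := by omega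
      rw [this]; exact hlast
    · have hceq : c = l.length := by omega
      have hdrop : l.drop c = [] := List.drop_eq_nil_of_le (by omega)
      have hlen : (l.take (i+1) ++ l.drop c).length = i+1 := by
        simp [hdrop, List.length_take]; omega
      rw [hlen, hdrop, List.append_nil]
      simp only [Nat.add_sub_cancel]
      rw [List.getElem?_take, if_pos (by omega), List.getElem?_eq_getElem hin]
      rw [hend hceq]
  · intro w hw
    rcases List.mem_append.1 hw with hw | hw
    · exact hmem w (List.take_subset _ _ hw)
    · exact hmem w (List.drop_subset _ _ hw)
  · simp only [List.length_append, List.length_take, List.length_drop]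
    omega

lemma exists_min_path (hst : s ≠ t) (hadj : ¬ H.Adj s t)
    (hex : ∃ l, GoodList H W s t l) :
    ∃ l : List V, GoodList H W s t l ∧ 3 ≤ l.length ∧
      (∀ (i j : ℕ) (hij : i < j) (hj : j < l.length),
        (H.Adj (l[i]'(Nat.lt_trans hij hj)) (l[j]'hj) ↔ j = i + 1) ∧
          l[i]'(Nat.lt_trans hij hj) ≠ l[j]'hj) := by
  classical
  obtain ⟨l₀, hl₀⟩ := hex
  have hexn : ∃ n, ∃ l, GoodList H W s t l ∧ l.length = n := ⟨l₀.length, l₀, hl₀, rfl⟩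
  obtain ⟨l, hl, hlen⟩ := Nat.find_spec hexn
  have hmin : ∀ l', GoodList H W s t l' → l.length ≤ l'.length := by
    intro l' hl'
    rw [hlen]
    exact Nat.find_le ⟨l', hl', rfl⟩
  clear hlen
  -- basic getters
  have hchain := hl.1
  have hpos := hl.2.1
  have h0 : l[0]'hpos = s := by
    have := hl.2.2.1; rw [List.getElem?_eq_getElem hpos] at this; simpa using this
  have hlastt : l[l.length - 1]'(by omega) = t := by
    have := hl.2.2.2.1; rw [List.getElem?_eq_getElem (by omega)] at this; simpa using this
  -- distinctness
  have hdist : ∀ (i j : ℕ) (hij : i < j) (hj : j < l.length),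
      l[i]'(Nat.lt_trans hij hj) ≠ l[j]'hj := by
    intro i j hij hj heq
    have hjun : ∀ hc : j + 1 < l.length, H.Adj (l[i]'(by omega)) (l[j+1]'hc) := by
      intro hc
      rw [heq]
      exact List.isChain_iff_getElem.1 hchain j (by omega)
    have hend : j + 1 = l.length → l[i]'(by omega) = t := by
      intro hc
      rw [heq]
      have : j = l.length - 1 := by omega
      subst this; exact hlastt
    obtain ⟨l', hl', hlt⟩ := glue hl i (j+1) (by omega) (by omega) hjun hend
    exact absurd (hmin l' hl') (by omega)
  -- no chords
  have hchord : ∀ (i j : ℕ) (hij : i < j) (hj : j < l.length),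
      H.Adj (l[i]'(Nat.lt_trans hij hj)) (l[j]'hj) → j = i + 1 := by
    intro i j hij hj hadj'
    by_contra hne
    obtain ⟨l', hl', hlt⟩ := glue hl i j (by omega) (by omega) (fun _ => hadj')
      (by intro h; omega)
    exact absurd (hmin l' hl') (by omega)
  have hlen2 : 2 ≤ l.length := by
    rcases Nat.lt_or_ge l.length 2 with h | h
    · have : l.length = 1 := by omega
      exact absurd (h0.symm.trans (by simp only [this] at hlastt ⊢; convert hlastt using 2 <;> omega)) hst
    · exact h
  have hlen3 : 3 ≤ l.length := by
    rcases Nat.lt_or_ge l.length 3 with h | h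
    · exfalso
      have h2 : l.length = 2 := by omega
      have hadj01 : H.Adj (l[0]'(by omega)) (l[1]'(by omega)) := by
        have := List.isChain_iff_getElem.1 hchain 0 (by omega)
        simpa using this
      have hlast? := hl.2.2.2.1
      rw [h2] at hlast?
      norm_num at hlast?
      rw [List.getElem?_eq_getElem (by omega)] at hlast?
      have h1t : l[1]'(by omega) = t := by simpa using hlast?
      rw [h0, h1t] at hadj01
      exact hadj hadj01
    · exact h
  refine ⟨l, hl, hlen3, fun i j hij hj => ⟨⟨hchord i j hij hj, ?_⟩, hdist i j hij hj⟩⟩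
  rintro rfl
  have := List.isChain_iff_getElem.1 hchain i (by omega)
  simpa using this

end DiracAux
namespace DiracAux

variable {V : Type*} {H : SimpleGraph V} {a b : V}

lemma exists_sep [Fintype V] (hne : a ≠ b) (hnadj : ¬H.Adj a b) :
    ∃ S : Finset V, a ∉ S ∧ b ∉ S ∧ ¬ Conn H ↑S a b := by
  classical
  refine ⟨Finset.univ \ {a, b}, by simp, by simp, ?_⟩
  rintro ⟨ha, hb, hr⟩
  have key : ∀ z, Relation.ReflTransGen
      (fun x y => H.Adj x y ∧ x ∉ (↑(Finset.univ \ ({a, b} : Finset V)) : Set V)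
        ∧ y ∉ (↑(Finset.univ \ ({a, b} : Finset V)) : Set V)) a z →
      z = a ∨ H.Adj a b := by
    intro z hz
    induction hz with
    | refl => exact .inl rfl
    | @tail y z hr hyz ih =>
      rcases ih with h' | h
      · rw [h'] at hyz
        have hz : z = a ∨ z = b := by
          have := hyz.2.2
          simp only [Finset.coe_sdiff, Finset.coe_univ, Set.mem_diff, Set.mem_univ, true_and,
            not_not] at this
          simpa using this
        rcases hz with rfl | rfl
        · exact absurd hyz.1 H.irrefl
        · exact .inr hyz.1
      · exact .inr h
  rcases key b hr with rfl | h
  · exact hne rfl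
  · exact hnadj h

lemma sep_neighbor [DecidableEq V] {S : Finset V} (hnab : ¬ Conn H ↑S a b) (ha : a ∉ S) (hb : b ∉ S)
    {s : V} (hs : s ∈ S) (hconn : Conn H ↑(S.erase s) a b) :
    ∃ u, Conn H ↑S a u ∧ H.Adj u s := by
  classical
  obtain ⟨ha', hb', hr⟩ := hconn
  have key : ∀ z, Relation.ReflTransGen
      (fun x y => H.Adj x y ∧ x ∉ (↑(S.erase s) : Set V) ∧ y ∉ (↑(S.erase s) : Set V)) a z →
      (∃ u, Conn H ↑S a u ∧ H.Adj u s) ∨ (z ≠ s ∧ Conn H ↑S a z) := by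
    intro z hz
    induction hz with
    | refl =>
      refine .inr ⟨fun h => ha (h ▸ hs), conn_refl (by simpa using ha)⟩
    | @tail y z hr hyz ih =>
      rcases ih with h | ⟨hys, hcy⟩
      · exact .inl h
      · by_cases hzs : z = s
        · subst hzs
          exact .inl ⟨y, hcy, hyz.1⟩
        · have hzS : z ∉ (↑S : Set V) := by
            have := hyz.2.2
            simp only [Finset.coe_erase, Set.mem_diff, Set.mem_singleton_iff, not_and, not_not] at this
            intro hzmem
            exact hzs (this hzmem)
          exact .inr ⟨hzs, conn_step hcy hyz.1 hzS⟩
  rcases key b hr with h | ⟨_, hc⟩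
  · exact h
  · exact absurd hc hnab

lemma exists_min_sep [Fintype V] [DecidableEq V] (hne : a ≠ b) (hnadj : ¬H.Adj a b) :
    ∃ S : Finset V, a ∉ S ∧ b ∉ S ∧ ¬ Conn H ↑S a b ∧
      (∀ s ∈ S, ∃ u, Conn H ↑S a u ∧ H.Adj u s) ∧
      (∀ s ∈ S, ∃ u, Conn H ↑S b u ∧ H.Adj u s) := by
  classical
  obtain ⟨S₀, h₀⟩ := exists_sep hne hnadj
  have hex : ∃ n, ∃ S : Finset V, (a ∉ S ∧ b ∉ S ∧ ¬ Conn H ↑S a b) ∧ S.card = n :=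
    ⟨S₀.card, S₀, h₀, rfl⟩
  obtain ⟨S, ⟨ha, hb, hnc⟩, hcard⟩ := Nat.find_spec hex
  have hmin : ∀ s ∈ S, Conn H ↑(S.erase s) a b := by
    intro s hs
    by_contra hc
    have : ∃ S' : Finset V, (a ∉ S' ∧ b ∉ S' ∧ ¬ Conn H ↑S' a b) ∧ S'.card = (S.erase s).card :=
      ⟨S.erase s, ⟨fun h => ha (Finset.mem_of_mem_erase h),
        fun h => hb (Finset.mem_of_mem_erase h), hc⟩, rfl⟩
    have hlt : (S.erase s).card < Nat.find hex := by
      rw [← hcard]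
      exact Finset.card_erase_lt_of_mem hs
    exact Nat.find_min hex hlt this
  refine ⟨S, ha, hb, hnc, ?_, ?_⟩
  · intro s hs
    exact sep_neighbor hnc ha hb hs (hmin s hs)
  · intro s hs
    have hnc' : ¬ Conn H ↑S b a := fun h => hnc (conn_symm h)
    exact sep_neighbor hnc' hb ha hs (conn_symm (hmin s hs))

lemma goodlist_exists {S : Set V} {s t : V} (hsS : s ∈ S) (htS : t ∈ S)
    (has : ∃ u, Conn H S a u ∧ H.Adj u s) (hat : ∃ u, Conn H S a u ∧ H.Adj u t) :
    ∃ l, GoodList H {x | Conn H S a x} s t l := by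
  obtain ⟨u₁, hu₁, hadj₁⟩ := has
  obtain ⟨u₂, hu₂, hadj₂⟩ := hat
  have hc12 : Conn H S u₁ u₂ := conn_trans (conn_symm hu₁) hu₂
  obtain ⟨lm, hchain, h0, hlast, hmem⟩ := conn_exists_list hc12
  rcases lm with _ | ⟨x, rest⟩
  · simp at h0
  obtain rfl : u₁ = x := by simpa using h0.symm
  refine ⟨s :: (u₁ :: rest ++ [t]), ?_, by simp, ?_, ?_, ?_⟩
  · refine List.isChain_cons.2 ?_
    constructor
    · intro y hy
      rw [show (u₁ :: rest ++ [t]) = (u₁ :: rest) ++ [t] by simp] at hy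
      rw [List.head?_append_of_ne_nil _ (by simp)] at hy
      obtain rfl : u₁ = y := by simpa using hy
      exact hadj₁.symm
    · rw [show (u₁ :: rest ++ [t]) = (u₁ :: rest) ++ [t] by simp]
      refine List.isChain_append.2 ⟨hchain, by simp, ?_⟩
      intro z hz y hy
      obtain rfl : t = y := by simpa using hy
      rw [List.getLast?_eq_getElem?, hlast] at hz
      obtain rfl : u₂ = z := by simpa using hz
      exact hadj₂
  · simp
  · rw [show (s :: (u₁ :: rest ++ [t])) = (s :: u₁ :: rest) ++ [t] by simp]
    rw [← List.getLast?_eq_getElem?]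
    exact List.getLast?_concat
  · intro w hw
    rcases List.mem_cons.1 hw with rfl | hw
    · exact .inl rfl
    have hw' : w ∈ (u₁ :: rest) ++ [t] := by simpa using hw
    rcases List.mem_append.1 hw' with hw2 | hw2
    · exact .inr (.inr (conn_trans hu₁ (hmem w hw2)))
    · exact .inr (.inl (by simpa using hw2))

end DiracAux
namespace DiracAux

variable {V : Type*} {H : SimpleGraph V}

lemma exists_induced_path {W : Set V} {s t : V} (hst : s ≠ t) (hadj : ¬ H.Adj s t)
    (hex : ∃ l, GoodList H W s t l) :
    ∃ (l : List V) (hlen : 3 ≤ l.length),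
      (∀ (i j : ℕ) (hij : i < j) (hj : j < l.length),
        (H.Adj (l[i]'(Nat.lt_trans hij hj)) (l[j]'hj) ↔ j = i + 1) ∧
          l[i]'(Nat.lt_trans hij hj) ≠ l[j]'hj) ∧
      l[0]'(by omega) = s ∧ l[l.length - 1]'(by omega) = t ∧
      (∀ (i : ℕ) (h1 : 0 < i) (h2 : i < l.length - 1), l[i]'(by omega) ∈ W) := by
  obtain ⟨l, hl, hlen, hind⟩ := exists_min_path hst hadj hex
  have h0 : l[0]'(by omega) = s := by
    have := hl.2.2.1
    rw [List.getElem?_eq_getElem (by omega)] at this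
    simpa using this
  have hlastt : l[l.length - 1]'(by omega) = t := by
    have := hl.2.2.2.1
    rw [List.getElem?_eq_getElem (by omega)] at this
    simpa using this
  refine ⟨l, hlen, hind, h0, hlastt, ?_⟩
  intro i h1 h2
  rcases hl.2.2.2.2 (l[i]'(by omega)) (List.getElem_mem _) with h | h | h
  · exact absurd (h0.trans h.symm) (hind 0 i h1 (by omega)).2
  · exact absurd (h.trans hlastt.symm) (hind i (l.length - 1) h2 (by omega)).2
  · exact h

lemma clique_of_sep (hH : Chordal H) {S : Set V} {a b s t : V}
    (hnab : ¬ Conn H S a b)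
    (has : ∃ u, Conn H S a u ∧ H.Adj u s) (hat : ∃ u, Conn H S a u ∧ H.Adj u t)
    (hbs : ∃ u, Conn H S b u ∧ H.Adj u s) (hbt : ∃ u, Conn H S b u ∧ H.Adj u t)
    (hsS : s ∈ S) (htS : t ∈ S) (hstne : s ≠ t) : H.Adj s t := by
  by_contra hnadj
  have hAB : ∀ x y, Conn H S a x → Conn H S b y → ¬ H.Adj x y ∧ x ≠ y := by
    intro x y hx hy
    refine ⟨fun h => hnab (conn_trans (conn_step hx h hy.2.1) (conn_symm hy)), ?_⟩
    rintro rfl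
    exact hnab (conn_trans hx (conn_symm hy))
  obtain ⟨l₁, hlen₁, hind₁, h₁0, h₁last, h₁int⟩ :=
    exists_induced_path hstne hnadj (goodlist_exists hsS htS has hat)
  obtain ⟨l₂, hlen₂, hind₂, h₂0, h₂last, h₂int⟩ :=
    exists_induced_path hstne.symm (fun h => hnadj h.symm) (goodlist_exists htS hsS hbt hbs)
  have hLlen : (l₁.dropLast ++ l₂.dropLast).length = (l₁.length - 1) + (l₂.length - 1) := by
    simp
  have hL1 : ∀ (i : ℕ) (h : i ≤ l₁.length - 1),
      (l₁.dropLast ++ l₂.dropLast)[i]'(by simp; omega) = l₁[i]'(by omega) := by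
    intro i h
    rcases Nat.lt_or_ge i (l₁.length - 1) with h' | h'
    · rw [List.getElem_append_left (by simp; omega)]
      exact List.getElem_dropLast _
    · have hik : i = l₁.length - 1 := by omega
      subst hik
      rw [List.getElem_append_right (by simp)]
      rw [List.getElem_dropLast]
      simp only [List.length_dropLast, Nat.sub_self]
      rw [h₂0, h₁last]
  have hL2 : ∀ (i : ℕ) (h1 : l₁.length - 1 ≤ i) (h2 : i < l₁.length - 1 + (l₂.length - 1)),
      (l₁.dropLast ++ l₂.dropLast)[i]'(by simp; omega) = l₂[i - (l₁.length - 1)]'(by omega) := by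
    intro i h1 h2
    rw [List.getElem_append_right (by simp; omega)]
    rw [List.getElem_dropLast]
    simp only [List.length_dropLast]
  have hmain : ∀ (i j : ℕ) (hij : i < j) (hj : j < l₁.length - 1 + (l₂.length - 1)),
      (H.Adj ((l₁.dropLast ++ l₂.dropLast)[i]'(by simp; omega))
        ((l₁.dropLast ++ l₂.dropLast)[j]'(by simp; omega)) ↔
        (j = i + 1 ∨ (i = 0 ∧ j = l₁.length - 1 + (l₂.length - 1) - 1))) ∧
      (l₁.dropLast ++ l₂.dropLast)[i]'(by simp; omega) ≠
        (l₁.dropLast ++ l₂.dropLast)[j]'(by simp; omega) := by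
    intro i j hij hj
    rcases le_or_gt j (l₁.length - 1) with hjk | hjk
    · -- both in l₁
      rw [hL1 i (by omega), hL1 j hjk]
      have key := hind₁ i j hij (by omega)
      refine ⟨?_, key.2⟩
      rw [key.1]
      constructor
      · exact fun h => .inl h
      · rintro (h | ⟨rfl, h2⟩)
        · exact h
        · omega
    · rcases Nat.lt_or_ge i (l₁.length - 1) with hik | hik
      · rcases Nat.eq_zero_or_pos i with rfl | hipos
        · -- i = 0, j in l₂ part
          have e0 : (l₁.dropLast ++ l₂.dropLast)[0]'(by simp; omega)
              = l₂[l₂.length - 1]'(by omega) := by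
            rw [hL1 0 (by omega), h₁0, h₂last]
          rw [e0, hL2 j (by omega) hj]
          have key := hind₂ (j - (l₁.length - 1)) (l₂.length - 1) (by omega) (by omega)
          constructor
          · rw [SimpleGraph.adj_comm, key.1]
            constructor
            · intro h
              exact .inr ⟨rfl, by omega⟩
            · rintro (h | ⟨h1, h2⟩)
              · exact absurd h (by omega)
              · omega
          · exact fun h => key.2 h.symm
        · -- 0 < i < l₁.length - 1 < j : interior of l₁ vs interior of l₂
          rw [hL1 i (by omega), hL2 j (by omega) hj]
          have hx := h₁int i hipos (by omega)
          have hy := h₂int (j - (l₁.length - 1)) (by omega) (by omega)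
          have key := hAB _ _ hx hy
          constructor
          · constructor
            · intro h
              exact absurd h key.1
            · rintro (h | ⟨h1, h2⟩)
              · exact absurd h (by omega)
              · exact absurd h1 (by omega)
          · exact key.2
      · -- both in l₂
        rw [hL2 i hik (by omega), hL2 j (by omega) hj]
        have key := hind₂ (i - (l₁.length - 1)) (j - (l₁.length - 1)) (by omega) (by omega)
        refine ⟨?_, key.2⟩
        rw [key.1]
        constructor
        · intro h
          exact .inl (by omega)
        · rintro (h | ⟨h1, h2⟩)
          · omega
          · exact absurd h1 (by omega)
  -- assemble the induced cycle
  set n := l₁.length - 1 + (l₂.length - 1) with hn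
  have h4 : 4 ≤ n := by omega
  haveI : NeZero n := ⟨by omega⟩
  have hval : ∀ i : ZMod n, i.val < (l₁.dropLast ++ l₂.dropLast).length := by
    intro i
    have := ZMod.val_lt i
    simp only [hLlen]
    omega
  have hplus : ∀ x : ZMod n, (x + 1).val = (x.val + 1) % n := by
    intro x
    rw [ZMod.val_add, ZMod.val_one_eq_one_mod]
    conv_rhs => rw [Nat.add_mod]
    rw [Nat.mod_eq_of_lt (ZMod.val_lt x)]
  have htrans : ∀ x y : ZMod n, y = x + 1 ↔ y.val = (x.val + 1) % n := by
    intro x y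
    rw [← hplus]
    exact ⟨fun h => by rw [h], fun h => ZMod.val_injective n h⟩
  have hnat : ∀ p q : ℕ, p < q → q < n →
      ((q = p + 1 ∨ (p = 0 ∧ q = n - 1)) ↔ (q = (p + 1) % n ∨ p = (q + 1) % n)) := by
    intro p q hpq hq
    have e1 : (p + 1) % n = p + 1 := Nat.mod_eq_of_lt (by omega)
    rcases eq_or_lt_of_le (Nat.succ_le_of_lt hq) with he | hl
    · have e2 : (q + 1) % n = 0 := by rw [show q + 1 = n from he, Nat.mod_self]
      rw [e1, e2]
      omega
    · have e2 : (q + 1) % n = q + 1 := Nat.mod_eq_of_lt hl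
      rw [e1, e2]
      omega
  refine hH n h4 (fun i => (l₁.dropLast ++ l₂.dropLast)[i.val]'(hval i)) ⟨?_, ?_⟩
  · intro i j hij
    rcases lt_trichotomy i.val j.val with h | h | h
    · exact absurd hij (hmain i.val j.val h (by have := ZMod.val_lt j; omega)).2
    · exact ZMod.val_injective n h
    · exact absurd hij.symm (hmain j.val i.val h (by have := ZMod.val_lt i; omega)).2
  · intro i j
    simp only
    rcases lt_trichotomy i.val j.val with h | h | h
    · rw [(hmain i.val j.val h (by have := ZMod.val_lt j; omega)).1,
        htrans i j, htrans j i]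
      exact hnat i.val j.val h (by have := ZMod.val_lt j; omega)
    · have hijeq : i = j := ZMod.val_injective n h
      subst hijeq
      constructor
      · intro h'
        exact absurd h' (H.irrefl)
      · rintro (h' | h') <;>
        · rw [htrans] at h'
          rcases eq_or_lt_of_le (Nat.succ_le_of_lt (ZMod.val_lt i)) with he | hl
          · rw [show i.val + 1 = n from he, Nat.mod_self] at h'
            have := ZMod.val_lt i
            omega
          · rw [Nat.mod_eq_of_lt hl] at h'
            omega
    · rw [SimpleGraph.adj_comm,
        (hmain j.val i.val h (by have := ZMod.val_lt i; omega)).1,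
        htrans i j, htrans j i]
      rw [hnat j.val i.val h (by have := ZMod.val_lt i; omega)]
      exact or_comm

end DiracAux
namespace DiracAux

variable {V : Type*}

def Grestr (G : SimpleGraph V) (T : Set V) : SimpleGraph V where
  Adj x y := G.Adj x y ∧ x ∈ T ∧ y ∈ T
  symm := ⟨fun x y ⟨h, hx, hy⟩ => ⟨h.symm, hy, hx⟩⟩
  loopless := ⟨fun x ⟨h, _, _⟩ => G.irrefl h⟩

lemma grestr_adj {G : SimpleGraph V} {T : Set V} {x y : V} :
    (Grestr G T).Adj x y ↔ G.Adj x y ∧ x ∈ T ∧ y ∈ T := Iff.rfl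

lemma chordal_restr {G : SimpleGraph V} (hG : Chordal G) (T : Set V) :
    Chordal (Grestr G T) := by
  intro n hn f hf
  apply hG n hn f
  obtain ⟨hinj, hiff⟩ := hf
  have hmemT : ∀ i : ZMod n, f i ∈ T := by
    intro i
    have h1 : (Grestr G T).Adj (f i) (f (i + 1)) := by
      rw [hiff i (i + 1)]
      exact .inl rfl
    exact h1.2.1
  refine ⟨hinj, fun i j => ?_⟩
  rw [← hiff i j]
  exact ⟨fun h => ⟨h, hmemT i, hmemT j⟩, fun h => h.1⟩

def SimplicialOn (G : SimpleGraph V) (T : Finset V) (v : V) : Prop :=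
  ∀ u w : V, u ∈ T → w ∈ T → G.Adj v u → G.Adj v w → u ≠ w → G.Adj u w

lemma side_lemma [Fintype V] [DecidableEq V] {G : SimpleGraph V} {T S : Finset V} {a b : V}
    (haT : a ∈ T) (hbT : b ∈ T) (haS : a ∉ S) (hbS : b ∉ S)
    (hnab : ¬ Conn (Grestr G ↑T) ↑S a b)
    (hclique : ∀ s ∈ S, ∀ t ∈ S, s ≠ t → (Grestr G ↑T).Adj s t)
    (hSnbr : ∀ s ∈ S, ∃ u, Conn (Grestr G ↑T) ↑S a u ∧ (Grestr G ↑T).Adj u s)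
    (IH : ∀ T' : Finset V, T'.card < T.card →
      ∀ x y, x ∈ T' → y ∈ T' → x ≠ y → ¬G.Adj x y →
      ∃ u ∈ T', ∃ v ∈ T', u ≠ v ∧ ¬G.Adj u v ∧ SimplicialOn G T' u ∧ SimplicialOn G T' v) :
    ∃ x, Conn (Grestr G ↑T) ↑S a x ∧ SimplicialOn G T x := by
  classical
  set H := Grestr G ↑T with hHdef
  set T₁ : Finset V := T.filter (fun x => Conn H ↑S a x ∨ x ∈ S) with hT₁
  have hsubT : T₁ ⊆ T := Finset.filter_subset _ _
  have hmemT_of_conn : ∀ x, Conn H ↑S a x → x ∈ T := by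
    intro x hx
    rcases conn_end_cases hx with rfl | ⟨z, hz⟩
    · exact haT
    · exact_mod_cast hz.2.2
  have hT₁mem : ∀ x, Conn H ↑S a x → x ∈ T₁ := fun x hx =>
    Finset.mem_filter.2 ⟨hmemT_of_conn x hx, .inl hx⟩
  have hSsubT₁ : ∀ x ∈ S, x ∈ T₁ := by
    intro x hx
    obtain ⟨u, hu, hadj⟩ := hSnbr x hx
    exact Finset.mem_filter.2 ⟨by exact_mod_cast hadj.2.2, .inr hx⟩
  have hbT₁ : b ∉ T₁ := by
    intro hb
    rcases (Finset.mem_filter.1 hb).2 with h | h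
    · exact hnab h
    · exact hbS h
  have hcard : T₁.card < T.card :=
    Finset.card_lt_card ((Finset.ssubset_iff_of_subset hsubT).2 ⟨b, hbT, hbT₁⟩)
  have haS' : a ∉ (↑S : Set V) := by simpa using haS
  have hnbr_in : ∀ x, Conn H ↑S a x → ∀ u ∈ T, G.Adj x u → u ∈ T₁ := by
    intro x hx u huT hadj
    by_cases huS : u ∈ (↑S : Set V)
    · exact hSsubT₁ u (by exact_mod_cast huS)
    · have hH : H.Adj x u := ⟨hadj, by exact_mod_cast hmemT_of_conn x hx, by exact_mod_cast huT⟩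
      exact hT₁mem u (conn_step hx hH huS)
  by_cases hcomplete : ∀ x ∈ T₁, ∀ y ∈ T₁, x ≠ y → G.Adj x y
  · refine ⟨a, conn_refl haS', ?_⟩
    intro u w huT hwT hau haw huw
    exact hcomplete u (hnbr_in a (conn_refl haS') u huT hau)
      w (hnbr_in a (conn_refl haS') w hwT haw) huw
  · push_neg at hcomplete
    obtain ⟨x, hxT₁, y, hyT₁, hxy, hnadj⟩ := hcomplete
    obtain ⟨u, huT₁, v, hvT₁, huv, hnuv, hsu, hsv⟩ := IH T₁ hcard x y hxT₁ hyT₁ hxy hnadj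
    have hone : Conn H ↑S a u ∨ Conn H ↑S a v := by
      rcases (Finset.mem_filter.1 huT₁).2 with h | h
      · exact .inl h
      rcases (Finset.mem_filter.1 hvT₁).2 with h' | h'
      · exact .inr h'
      · exact absurd (hclique u h v h' huv).1 hnuv
    have promote : ∀ z, Conn H ↑S a z → SimplicialOn G T₁ z → SimplicialOn G T z := by
      intro z hz hs u' w' hu' hw' h1 h2 h3
      exact hs u' w' (hnbr_in z hz u' hu' h1) (hnbr_in z hz w' hw' h2) h1 h2 h3
    rcases hone with h | h
    · exact ⟨u, h, promote u h hsu⟩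
    · exact ⟨v, h, promote v h hsv⟩

lemma dirac_rec [Fintype V] {G : SimpleGraph V} (hG : Chordal G) :
    ∀ (N : ℕ) (T : Finset V), T.card ≤ N →
      ∀ a b, a ∈ T → b ∈ T → a ≠ b → ¬G.Adj a b →
      ∃ u ∈ T, ∃ v ∈ T, u ≠ v ∧ ¬G.Adj u v ∧ SimplicialOn G T u ∧ SimplicialOn G T v := by
  intro N
  induction N with
  | zero =>
    intro T hT a b haT
    rw [Nat.le_zero, Finset.card_eq_zero] at hT
    subst hT
    simp at haT
  | succ N ih =>
    intro T hT a b haT hbT hne hnadj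
    classical
    set H := Grestr G ↑T with hHdef
    have hH : Chordal H := chordal_restr hG ↑T
    have hnadjH : ¬ H.Adj a b := fun h => hnadj h.1
    obtain ⟨S, haS, hbS, hnc, hna, hnb⟩ := exists_min_sep (H := H) hne hnadjH
    have hclique : ∀ s ∈ S, ∀ t ∈ S, s ≠ t → H.Adj s t := by
      intro s hs t ht hst
      exact clique_of_sep hH hnc (hna s hs) (hna t ht) (hnb s hs) (hnb t ht)
        (by exact_mod_cast hs) (by exact_mod_cast ht) hst
    have IH' : ∀ T' : Finset V, T'.card < T.card →
        ∀ x y, x ∈ T' → y ∈ T' → x ≠ y → ¬G.Adj x y →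
        ∃ u ∈ T', ∃ v ∈ T', u ≠ v ∧ ¬G.Adj u v ∧ SimplicialOn G T' u ∧ SimplicialOn G T' v :=
      fun T' hc => ih T' (by omega)
    obtain ⟨x, hxc, hxs⟩ := side_lemma haT hbT haS hbS hnc hclique hna IH'
    have hnc' : ¬ Conn H ↑S b a := fun h => hnc (conn_symm h)
    obtain ⟨y, hyc, hys⟩ := side_lemma hbT haT hbS haS hnc' hclique hnb IH'
    have hmemT_of_conn : ∀ c x, c ∈ T → Conn H ↑S c x → x ∈ T := by
      intro c x hcT hx
      rcases conn_end_cases hx with rfl | ⟨z, hz⟩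
      · exact hcT
      · exact_mod_cast hz.2.2
    have hxT : x ∈ T := hmemT_of_conn a x haT hxc
    have hyT : y ∈ T := hmemT_of_conn b y hbT hyc
    have hxyne : x ≠ y := by
      rintro rfl
      exact hnc (conn_trans hxc (conn_symm hyc))
    have hxynadj : ¬ G.Adj x y := by
      intro hadjxy
      have hHxy : H.Adj x y := ⟨hadjxy, by exact_mod_cast hxT, by exact_mod_cast hyT⟩
      exact hnc (conn_trans (conn_step hxc hHxy hyc.2.1) (conn_symm hyc))
    exact ⟨x, hxT, y, hyT, hxyne, hxynadj, hxs, hys⟩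

end DiracAux

theorem stmt_15 {V : Type*} [Fintype V] (G : SimpleGraph V) (hG : Chordal G)
    (hnc : ¬ ∀ u v : V, u ≠ v → G.Adj u v) :
    ∃ u v : V, u ≠ v ∧ ¬ G.Adj u v ∧ Simplicial G u ∧ Simplicial G v := by
  push_neg at hnc
  obtain ⟨a, b, hne, hnadj⟩ := hnc
  obtain ⟨u, -, v, -, huv, hnuv, hsu, hsv⟩ :=
    DiracAux.dirac_rec hG (Finset.univ.card) Finset.univ le_rfl a b
      (Finset.mem_univ a) (Finset.mem_univ b) hne hnadj
  exact ⟨u, v, huv, hnuv,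
    fun x y hx hy hxy => hsu x y (Finset.mem_univ x) (Finset.mem_univ y) hx hy hxy,
    fun x y hx hy hxy => hsv x y (Finset.mem_univ x) (Finset.mem_univ y) hx hy hxy⟩
end

section
/- Let G' be a chordal graph, e = uv an edge of G' such that u and v have no two non-adjacent common neighbours in G'. Then G' − e is chordal. -/
open SimpleGraph

/-! If an induced cycle `C` of length at least 4 in `G' - uv` misses `u` or `v`, it is induced
in `G'` as well. Otherwise the chord `uv` splits `C` into two cycles of `G'`, both induced; by
chordality both are triangles, so `C` is a square `u x v y`, and `x`, `y` are non-adjacent common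
neighbours of `u` and `v`. -/

theorem ZMod.eq_add_one_iff_val_s17 {m : ℕ} [NeZero m] (x y : ZMod m) :
    y = x + 1 ↔ y.val = x.val + 1 ∨ (y.val = 0 ∧ x.val + 1 = m) := by
  rw [← ZMod.val_injective m |>.eq_iff, ZMod.val_add, ZMod.val_one_eq_one_mod, Nat.add_mod_mod]
  have hx := ZMod.val_lt x
  have hy := ZMod.val_lt y
  rcases Nat.lt_or_ge (x.val + 1) m with hlt | hge
  · rw [Nat.mod_eq_of_lt hlt]; omega
  · rw [show x.val + 1 = m by omega, Nat.mod_self]; omega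

theorem SimpleGraph.adj_iff_deleteEdges_adj_or {V : Type*} {G : SimpleGraph V} {u v : V}
    (huv : G.Adj u v) (x y : V) :
    G.Adj x y ↔ (G.deleteEdges {s(u, v)}).Adj x y ∨ s(x, y) = s(u, v) := by
  rw [deleteEdges_adj, Set.mem_singleton_iff]
  by_cases h : s(x, y) = s(u, v)
  · simp only [h, not_true_eq_false, and_false, or_true, iff_true]
    rwa [← mem_edgeSet, h, mem_edgeSet]
  · simp [h]

namespace IsInducedCycle

variable {V : Type*} {G : SimpleGraph V} {n : ℕ} {f : ZMod n → V}

theorem rotate (hf : IsInducedCycle G n f) (c : ZMod n) :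
    IsInducedCycle G n (fun k => f (c + k)) := by
  refine ⟨fun a b hab => add_left_cancel (hf.1 hab), fun a b => ?_⟩
  rw [hf.2, add_assoc, add_assoc, add_right_inj, add_right_inj]

theorem of_deleteEdges {u v : V} (hf : IsInducedCycle (G.deleteEdges {s(u, v)}) n f)
    (hu : u ∉ Set.range f) : IsInducedCycle G n f := by
  refine ⟨hf.1, fun a b => ?_⟩
  rw [← hf.2, deleteEdges_adj, Set.mem_singleton_iff, Sym2.eq_iff, iff_self_and]
  rintro - (⟨h, -⟩ | ⟨-, h⟩)
  exacts [hu ⟨a, h⟩, hu ⟨b, h⟩]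

theorem two_le_val_of_deleteEdges [NeZero n] {c : ZMod n}
    (hf : IsInducedCycle (G.deleteEdges {s(f 0, f c)}) n f) (hadj : G.Adj (f 0) (f c)) :
    2 ≤ c.val ∧ c.val + 2 ≤ n := by
  have hc : c.val ≠ 0 := by
    rw [Ne, ZMod.val_eq_zero]
    rintro rfl
    exact hadj.ne rfl
  have hnot : ¬ (c = 0 + 1 ∨ 0 = c + 1) := by
    rw [← hf.2]
    simp
  rw [ZMod.eq_add_one_iff_val_s17, ZMod.eq_add_one_iff_val_s17, ZMod.val_zero] at hnot
  have := ZMod.val_lt c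
  omega

theorem arc {d : ℕ} (hf : IsInducedCycle (G.deleteEdges {s(f 0, f d)}) n f)
    (hadj : G.Adj (f 0) (f d)) (hdn : d + 2 ≤ n) :
    IsInducedCycle G (d + 1) (fun k => f (k.val : ZMod n)) := by
  have : NeZero n := ⟨by omega⟩
  have hval (k : ZMod (d + 1)) : ((k.val : ℕ) : ZMod n).val = k.val :=
    ZMod.val_natCast_of_lt (by have := ZMod.val_lt k; omega)
  refine ⟨fun a b hab => ZMod.val_injective _ ?_, fun a b => ?_⟩
  · rw [← hval a, ← hval b, hf.1 hab]
  rw [adj_iff_deleteEdges_adj_or hadj, hf.2, Sym2.eq_iff, hf.1.eq_iff, hf.1.eq_iff, hf.1.eq_iff,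
    hf.1.eq_iff]
  simp only [ZMod.eq_add_one_iff_val_s17]
  simp only [← (ZMod.val_injective n).eq_iff, hval, ZMod.val_zero,
    ZMod.val_natCast_of_lt (show d < n by omega)]
  have := ZMod.val_lt a
  have := ZMod.val_lt b
  omega

theorem val_sub_eq_two_of_chordal [NeZero n] (hG : Chordal G) {a b : ZMod n}
    (hf : IsInducedCycle (G.deleteEdges {s(f a, f b)}) n f) (hadj : G.Adj (f a) (f b)) :
    (b - a).val = 2 := by
  set g : ZMod n → V := fun k => f (a + k)
  have hg0 : g 0 = f a := by simp [g]
  have hgc : g (b - a) = f b := by simp [g]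
  have hg : IsInducedCycle (G.deleteEdges {s(g 0, g (b - a))}) n g := by
    rw [hg0, hgc]
    exact hf.rotate a
  have hgadj : G.Adj (g 0) (g (b - a)) := by rwa [hg0, hgc]
  obtain ⟨h2, hle⟩ := hg.two_le_val_of_deleteEdges hgadj
  rw [← ZMod.natCast_zmod_val (b - a)] at hg hgadj
  by_contra hne
  exact hG _ (by omega) _ (hg.arc hgadj hle)

theorem exists_nonadj_common_neighbors {f : ZMod 4 → V}
    (hf : IsInducedCycle (G.deleteEdges {s(f 0, f 2)}) 4 f) :
    ∃ x y, G.Adj (f 0) x ∧ G.Adj (f 2) x ∧ G.Adj (f 0) y ∧ G.Adj (f 2) y ∧ x ≠ y ∧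
      ¬ G.Adj x y := by
  have hadj (i j : ZMod 4) (h : j = i + 1 ∨ i = j + 1 := by decide) : G.Adj (f i) (f j) :=
    deleteEdges_le _ ((hf.2 i j).2 h)
  refine ⟨f 1, f 3, hadj 0 1, hadj 2 1, hadj 0 3, hadj 2 3, hf.1.ne (by decide), fun h13 => ?_⟩
  have hne : s(f 1, f 3) ∉ ({s(f 0, f 2)} : Set (Sym2 V)) := by
    simp only [Set.mem_singleton_iff, Sym2.eq_iff, hf.1.eq_iff]
    decide
  exact absurd ((hf.2 1 3).1 (deleteEdges_adj.2 ⟨h13, hne⟩)) (by decide)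

end IsInducedCycle

theorem stmt_17 {V : Type*} (G' : SimpleGraph V) (hG : Chordal G')
    (u v : V) (huv : G'.Adj u v)
    (h : ∀ x y : V, G'.Adj u x → G'.Adj v x → G'.Adj u y → G'.Adj v y →
      x ≠ y → G'.Adj x y) :
    Chordal (G'.deleteEdges {s(u, v)}) := by
  intro n hn f hf
  have : NeZero n := ⟨by omega⟩
  have hf' : IsInducedCycle (G'.deleteEdges {s(v, u)}) n f := by rwa [Sym2.eq_swap]
  obtain ⟨i, rfl⟩ : u ∈ Set.range f := by_contra fun hu => hG n hn f (hf.of_deleteEdges hu)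
  obtain ⟨j, rfl⟩ : v ∈ Set.range f := by_contra fun hv => hG n hn f (hf'.of_deleteEdges hv)
  have hij := hf.val_sub_eq_two_of_chordal hG huv
  have hji := hf'.val_sub_eq_two_of_chordal hG huv.symm
  have hn4 : n = 4 := by
    rw [← neg_sub, ZMod.neg_val', hij, Nat.mod_eq_of_lt (by omega)] at hji
    omega
  subst hn4
  obtain rfl : j = i + 2 := by
    rw [← sub_eq_iff_eq_add', ← ZMod.natCast_zmod_val (j - i), hij]
    rfl
  have hg : IsInducedCycle (G'.deleteEdges {s(f (i + 0), f (i + 2))}) 4 (fun k => f (i + k)) := by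
    rw [add_zero]
    exact hf.rotate i
  obtain ⟨x, y, hux, hvx, huy, hvy, hxy, hnadj⟩ := hg.exists_nonadj_common_neighbors
  rw [add_zero] at hux huy
  exact hnadj (h x y hux hvx huy hvy hxy)
end
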